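/- arXiv:2509.18657 — 6 statements merged into one kernel-verified Lean document; each statement's English description precedes it below -/
import Mathlib

section
/- If f is a Rakotch contraction on a complete metric space (X, d), then f has a unique fixed point t₀, and for every t ∈ X the sequence of iterates fⁿ(t) converges to t₀. -/
open Filter Topology

/-- Auxiliary: a nonnegative sequence satisfying `a (n+1) ≤ ψ (a n)` (with the
degenerate case handled) tends to zero. -/
lemma rakotch_aux (ψ : ℝ → ℝ)
    (hψ_lt : ∀ t : ℝ, 0 < t → ψ t / t < 1)
    (hψ_ratio : ∀ s t : ℝ, 0 < s → s < t → ψ t / t ≤ ψ s / s)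
    (a : ℕ → ℝ) (ha0 : ∀ n, 0 ≤ a n)
    (hstep : ∀ n, a (n + 1) ≤ ψ (a n))
    (hzero : ∀ n, a n = 0 → a (n + 1) = 0) :
    Tendsto a atTop (nhds 0) := by
  have hlt : ∀ t : ℝ, 0 < t → ψ t < t := by
    intro t ht
    have := hψ_lt t ht
    calc ψ t = ψ t / t * t := by field_simp
    _ < 1 * t := by exact mul_lt_mul_of_pos_right this ht
    _ = t := one_mul t
  have hanti : Antitone a := by
    apply antitone_nat_of_succ_le
    intro n
    rcases eq_or_lt_of_le (ha0 n) with h | h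
    · rw [hzero n h.symm, ← h]
    · exact (hstep n).trans (hlt _ h).le
  have hbdd : BddBelow (Set.range a) := ⟨0, by rintro x ⟨n, rfl⟩; exact ha0 n⟩
  have htend : Tendsto a atTop (nhds (⨅ n, a n)) := tendsto_atTop_ciInf hanti hbdd
  set L := ⨅ n, a n with hL
  have hL0 : 0 ≤ L := le_ciInf ha0
  rcases eq_or_lt_of_le hL0 with h | h
  · rwa [← h] at htend
  · exfalso
    have hLle : ∀ n, L ≤ a n := fun n => ciInf_le hbdd n
    set r := ψ L / L with hr
    have hr1 : r < 1 := hψ_lt L h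
    have hkey : ∀ n, a (n + 1) ≤ r * a n := by
      intro n
      rcases eq_or_lt_of_le (hLle n) with heq | hlt'
      · calc a (n + 1) ≤ ψ (a n) := hstep n
        _ = r * a n := by rw [← heq, hr]; field_simp
      · calc a (n + 1) ≤ ψ (a n) := hstep n
        _ = ψ (a n) / a n * a n := by field_simp [(h.trans hlt').ne']
        _ ≤ r * a n := mul_le_mul_of_nonneg_right (hψ_ratio L (a n) h hlt') (ha0 n)
    have hr0 : 0 < r := by
      have h0 : 0 < a 0 := lt_of_lt_of_le h (hLle 0)
      have h1 : 0 < r * a 0 := lt_of_lt_of_le (lt_of_lt_of_le h (hLle 1)) (hkey 0)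
      by_contra hc
      push_neg at hc
      nlinarith
    have hgeo : ∀ n, a n ≤ r ^ n * a 0 := by
      intro n
      induction n with
      | zero => simp
      | succ n ih =>
        calc a (n + 1) ≤ r * a n := hkey n
        _ ≤ r * (r ^ n * a 0) := mul_le_mul_of_nonneg_left ih hr0.le
        _ = r ^ (n + 1) * a 0 := by ring
    have hgt : Tendsto (fun n => r ^ n * a 0) atTop (nhds 0) := by
      have := tendsto_pow_atTop_nhds_zero_of_lt_one hr0.le hr1
      simpa using this.mul_const (a 0)
    have : L ≤ 0 := le_of_tendsto_of_tendsto' tendsto_const_nhds hgt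
      (fun n => (hLle n).trans (hgeo n))
    exact absurd this (not_le.mpr h)

/-- Rakotch's fixed point theorem: a Rakotch contraction on a complete metric
space has a unique fixed point, and every orbit converges to it. -/
theorem rakotch_fixed_point {X : Type*} [MetricSpace X] [CompleteSpace X] [Nonempty X]
    (f : X → X) (ψ : ℝ → ℝ)
    (hψ_mono : ∀ s t : ℝ, 0 ≤ s → s ≤ t → ψ s ≤ ψ t)
    (hψ_lt : ∀ t : ℝ, 0 < t → ψ t / t < 1)
    (hψ_ratio : ∀ s t : ℝ, 0 < s → s < t → ψ t / t ≤ ψ s / s)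
    (hf : ∀ x y : X, dist (f x) (f y) ≤ ψ (dist x y)) :
    ∃ t₀ : X, f t₀ = t₀ ∧ (∀ t' : X, f t' = t' → t' = t₀) ∧
      ∀ t : X, Filter.Tendsto (fun n => f^[n] t) Filter.atTop (nhds t₀) := by
  have hlt : ∀ t : ℝ, 0 < t → ψ t < t := by
    intro t ht
    have := hψ_lt t ht
    calc ψ t = ψ t / t * t := by field_simp
    _ < 1 * t := mul_lt_mul_of_pos_right this ht
    _ = t := one_mul t
  -- f is nonexpansive, hence continuous
  have hne : ∀ x y : X, dist (f x) (f y) ≤ dist x y := by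
    intro x y
    rcases eq_or_lt_of_le (dist_nonneg : (0:ℝ) ≤ dist x y) with h | h
    · have : x = y := dist_le_zero.mp (le_of_eq h.symm)
      subst this; simp
    · exact (hf x y).trans (hlt _ h).le
  have hcont : Continuous f := (LipschitzWith.of_dist_le_mul
    (by intro x y; simpa using hne x y) : LipschitzWith 1 f).continuous
  -- fix a base point; its orbit is Cauchy
  set t : X := Classical.arbitrary X
  set u : ℕ → X := fun n => f^[n] t with hu
  have hu_succ : ∀ n, u (n + 1) = f (u n) := fun n => Function.iterate_succ_apply' f n t
  set a : ℕ → ℝ := fun n => dist (u n) (u (n + 1)) with ha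
  have ha_tend : Tendsto a atTop (nhds 0) := by
    apply rakotch_aux ψ hψ_lt hψ_ratio a (fun n => dist_nonneg)
    · intro n
      simpa [ha, hu_succ n, hu_succ (n + 1)] using hf (u n) (u (n + 1))
    · intro n hn
      have he : u n = u (n + 1) := dist_le_zero.mp (le_of_eq hn)
      have h2 : u (n + 1) = u (n + 1 + 1) := by
        rw [hu_succ n, hu_succ (n + 1), he]
      show dist (u (n + 1)) (u (n + 1 + 1)) = 0
      rw [h2, dist_self]
  have hcauchy : CauchySeq u := by
    rw [Metric.cauchySeq_iff']
    intro ε hε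
    set ε' := ε / 2 with hε'
    have hε'0 : 0 < ε' := by positivity
    set r := ψ ε' / ε' with hrdef
    have hr1 : r < 1 := hψ_lt ε' hε'0
    have hδ : 0 < (1 - r) * ε' := mul_pos (by linarith) hε'0
    rw [Metric.tendsto_atTop] at ha_tend
    obtain ⟨N, hN⟩ := ha_tend ((1 - r) * ε') hδ
    refine ⟨N, fun n hn => ?_⟩
    have haN : a N ≤ (1 - r) * ε' := by
      have := hN N le_rfl
      rw [Real.dist_eq, sub_zero, abs_of_nonneg dist_nonneg] at this
      exact this.le
    -- show by induction that dist (u N) (u (N + m)) ≤ ε'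
    have hball : ∀ m, dist (u N) (u (N + m)) ≤ ε' := by
      intro m
      induction m with
      | zero => simp only [Nat.add_zero, dist_self]; exact hε'0.le
      | succ m ih =>
        have h1 : dist (u N) (u (N + m + 1)) ≤
            dist (u N) (u (N + 1)) + dist (u (N + 1)) (u (N + m + 1)) := dist_triangle _ _ _
        have h2 : dist (u (N + 1)) (u (N + m + 1)) ≤ ψ (dist (u N) (u (N + m))) := by
          rw [hu_succ N, hu_succ (N + m)]
          exact hf _ _
        have h3 : ψ (dist (u N) (u (N + m))) ≤ ψ ε' := hψ_mono _ _ dist_nonneg ih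
        have h4 : ψ ε' = r * ε' := by rw [hrdef]; field_simp
        calc dist (u N) (u (N + m + 1)) ≤ a N + ψ (dist (u N) (u (N + m))) := by
              exact h1.trans (add_le_add_right h2 _)
        _ ≤ (1 - r) * ε' + r * ε' := add_le_add haN (h3.trans (le_of_eq h4))
        _ = ε' := by ring
    obtain ⟨m, rfl⟩ := Nat.exists_eq_add_of_le hn
    calc dist (u (N + m)) (u N) = dist (u N) (u (N + m)) := dist_comm _ _
    _ ≤ ε' := hball m
    _ < ε := by rw [hε']; linarith
  obtain ⟨t₀, ht₀⟩ := cauchySeq_tendsto_of_complete hcauchy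
  -- t₀ is a fixed point
  have hfix : f t₀ = t₀ := by
    have h1 : Tendsto (fun n => u (n + 1)) atTop (nhds t₀) := ht₀.comp (tendsto_add_atTop_nat 1)
    have h2 : Tendsto (fun n => f (u n)) atTop (nhds (f t₀)) := (hcont.tendsto t₀).comp ht₀
    have : (fun n => u (n + 1)) = fun n => f (u n) := funext hu_succ
    rw [this] at h1
    exact tendsto_nhds_unique h2 h1
  -- every orbit converges to t₀
  have horbit : ∀ s : X, Tendsto (fun n => f^[n] s) atTop (nhds t₀) := by
    intro s
    set b : ℕ → ℝ := fun n => dist (f^[n] s) t₀ with hb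
    have hfix_iter : ∀ n : ℕ, f^[n] t₀ = t₀ := by
      intro n
      induction n with
      | zero => rfl
      | succ n ih => rw [Function.iterate_succ_apply', ih, hfix]
    have hb_tend : Tendsto b atTop (nhds 0) := by
      apply rakotch_aux ψ hψ_lt hψ_ratio b (fun n => dist_nonneg)
      · intro n
        have : b (n + 1) = dist (f (f^[n] s)) (f t₀) := by
          rw [hb]; simp only [Function.iterate_succ_apply', hfix]
        rw [this]
        exact hf _ _
      · intro n hn
        have : f^[n] s = t₀ := dist_le_zero.mp (le_of_eq hn)
        simp [hb, Function.iterate_succ_apply', this, hfix]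
    rw [tendsto_iff_dist_tendsto_zero]
    exact hb_tend
  refine ⟨t₀, hfix, ?_, horbit⟩
  intro t' ht'
  have hiter : ∀ n : ℕ, f^[n] t' = t' := by
    intro n
    induction n with
    | zero => rfl
    | succ n ih => rw [Function.iterate_succ_apply', ih, ht']
  have := horbit t'
  simp only [hiter] at this
  exact tendsto_nhds_unique tendsto_const_nhds this
end

section
/- Let I = [t₀, t_N], and let B(I) denote the bounded real-valued functions on I with the sup metric. Let I be partitioned into I_j (half-open intervals determined by t₀ < ⋯ < t_N). Let l_j : I → I_j be the affine homeomorphisms with l_j(t₀) = t_{j-1}, l_j(t_N) = t_j. Suppose each s_j : ℝ → ℝ satisfies |s_j(x) − s_j(y)| ≤ ψ(|x−y|) for a common nondecreasing ψ with ψ(t) < t for t > 0 and ψ(t)/t nonincreasing, and let δ_j, c_j, d_j be constants with δ := max_j |δ_j| satisfying δ·sup_{t>0} ψ(t)/t < 1. Define T : B(I) → B(I) by (Th)(t) = c_j l_j⁻¹(t) + δ_j s_j(h(l_j⁻¹(t))) + d_j for t ∈ I_j. Then for all g, g' ∈ B(I), d_∞(Tg, Tg') ≤ δ·ψ(d_∞(g,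 g')). -/
/-- The Read-Bajraktarević operator satisfies
`d_∞(Tg, Tg') ≤ δ·ψ(d_∞(g, g'))` on the bounded functions of `I = [t₀, t_N]`. -/
theorem RB_operator_contraction (N : ℕ) (hN : 1 ≤ N) (t : ℕ → ℝ)
    (ht : ∀ j < N, t j < t (j + 1))
    (a b c d δ : ℕ → ℝ) (s : ℕ → ℝ → ℝ) (ψ : ℝ → ℝ)
    -- the affine maps l j x = a j * x + b j with the endpoint conditions
    (hl0 : ∀ j ∈ Finset.Icc 1 N, a j * t 0 + b j = t (j - 1))
    (hlN : ∀ j ∈ Finset.Icc 1 N, a j * t N + b j = t j)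
    -- ψ is a common Rakotch comparison function for the maps s j
    (hψ_mono : ∀ u v : ℝ, 0 ≤ u → u ≤ v → ψ u ≤ ψ v)
    (hψ_lt : ∀ u : ℝ, 0 < u → ψ u < u)
    (hψ_ratio : ∀ u v : ℝ, 0 < u → u < v → ψ v / v ≤ ψ u / u)
    (hs : ∀ j ∈ Finset.Icc 1 N, ∀ x y : ℝ, |s j x - s j y| ≤ ψ (|x - y|))
    -- δmax = max_j |δ j| and δmax · sup_{u>0} ψ(u)/u < 1
    (hne : (Finset.Icc 1 N).Nonempty) (δmax : ℝ)
    (hδmax : δmax = (Finset.Icc 1 N).sup' hne fun j => |δ j|)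
    (hδψ : ∃ β : ℝ, β < 1 ∧ ∀ u : ℝ, 0 < u → δmax * (ψ u / u) ≤ β)
    -- the operator T : (Th)(t) = c_j l_j⁻¹(t) + δ_j s_j(h(l_j⁻¹(t))) + d_j on I_j
    (T : (ℝ → ℝ) → (ℝ → ℝ))
    (hT : ∀ h : ℝ → ℝ, ∀ j ∈ Finset.Icc 1 N, ∀ u ∈ Set.Icc (t 0) (t N),
      a j * u + b j ∈ (if j = N then Set.Icc (t (N - 1)) (t N)
        else Set.Ico (t (j - 1)) (t j)) →
      T h (a j * u + b j) = c j * u + δ j * s j (h u) + d j)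
    -- bounded functions g, g'
    (g g' : ℝ → ℝ)
    (hg : ∃ M : ℝ, ∀ x ∈ Set.Icc (t 0) (t N), |g x| ≤ M)
    (hg' : ∃ M : ℝ, ∀ x ∈ Set.Icc (t 0) (t N), |g' x| ≤ M) :
    sSup ((fun x => |T g x - T g' x|) '' Set.Icc (t 0) (t N)) ≤
      δmax * ψ (sSup ((fun x => |g x - g' x|) '' Set.Icc (t 0) (t N))) := by
  -- monotonicity of t
  have tmono : ∀ i j : ℕ, i ≤ j → j ≤ N → t i ≤ t j := by
    intro i j hij hjN
    induction j with
    | zero => exact Nat.le_zero.mp hij ▸ le_rfl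
    | succ k ih =>
      rcases Nat.eq_or_lt_of_le hij with h | h
      · exact h ▸ le_rfl
      · exact (ih (Nat.lt_succ_iff.mp h) (by omega)).trans
          (le_of_lt (ht k (by omega)))
  have ht0N : t 0 < t N := by
    have h1 := ht (N - 1) (by omega)
    have : N - 1 + 1 = N := by omega
    rw [this] at h1
    exact lt_of_le_of_lt (tmono 0 (N - 1) (Nat.zero_le _) (by omega)) h1
  -- positivity of a j
  have ha : ∀ j ∈ Finset.Icc 1 N, 0 < a j := by
    intro j hj
    have h1 := hl0 j hj
    have h2 := hlN j hj
    have hj1 : 1 ≤ j := (Finset.mem_Icc.mp hj).1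
    have hjN : j ≤ N := (Finset.mem_Icc.mp hj).2
    have htj : t (j - 1) < t j := by
      have := ht (j - 1) (by omega)
      have e : j - 1 + 1 = j := by omega
      rwa [e] at this
    have : a j * (t N - t 0) = t j - t (j - 1) := by ring_nf; linarith
    nlinarith [sub_pos.mpr ht0N, sub_pos.mpr htj]
  obtain ⟨Mg, hMg⟩ := hg
  obtain ⟨Mg', hMg'⟩ := hg'
  set D := sSup ((fun x => |g x - g' x|) '' Set.Icc (t 0) (t N)) with hD
  have hbdd : BddAbove ((fun x => |g x - g' x|) '' Set.Icc (t 0) (t N)) := by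
    refine ⟨Mg + Mg', ?_⟩
    rintro y ⟨x, hx, rfl⟩
    calc |g x - g' x| ≤ |g x| + |g' x| := abs_sub _ _
      _ ≤ Mg + Mg' := add_le_add (hMg x hx) (hMg' x hx)
  have hDmem : ∀ x ∈ Set.Icc (t 0) (t N), |g x - g' x| ≤ D :=
    fun x hx => le_csSup hbdd ⟨x, hx, rfl⟩
  have hD0 : 0 ≤ D :=
    le_trans (abs_nonneg _) (hDmem (t 0) ⟨le_rfl, le_of_lt ht0N⟩)
  obtain ⟨j₀, hj₀⟩ := hne
  have hψ0 : 0 ≤ ψ 0 := by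
    have := hs j₀ hj₀ 0 0
    simpa using this
  have hψnonneg : ∀ w : ℝ, 0 ≤ w → 0 ≤ ψ w :=
    fun w hw => le_trans hψ0 (hψ_mono 0 w le_rfl hw)
  have hψD : 0 ≤ ψ D := hψnonneg D hD0
  have hδmax0 : 0 ≤ δmax := by
    rw [hδmax]
    exact le_trans (abs_nonneg (δ j₀)) (Finset.le_sup' (fun j => |δ j|) hj₀)
  refine Real.sSup_le ?_ (mul_nonneg hδmax0 hψD)
  rintro y ⟨x, hx, rfl⟩
  obtain ⟨hx0, hxN⟩ := hx
  -- find the interval containing x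
  have hcover : ∃ j ∈ Finset.Icc 1 N, t (j - 1) ≤ x ∧ x ≤ t j ∧
      (j = N ∨ x < t j) := by
    rcases eq_or_lt_of_le hxN with h | h
    · exact ⟨N, Finset.mem_Icc.mpr ⟨hN, le_rfl⟩,
        h ▸ tmono (N - 1) N (by omega) le_rfl, hxN, Or.inl rfl⟩
    · have hex : ∃ j, x < t j := ⟨N, h⟩
      set j := Nat.find hex with hjdef
      have hjspec : x < t j := Nat.find_spec hex
      have hjle : j ≤ N := Nat.find_le h
      have hj0 : j ≠ 0 := by
        intro h0
        have := hjspec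
        rw [h0] at this
        linarith
      have hjpred : ¬ x < t (j - 1) := Nat.find_min hex (by omega)
      exact ⟨j, Finset.mem_Icc.mpr ⟨by omega, hjle⟩, not_lt.mp hjpred,
        le_of_lt hjspec, Or.inr hjspec⟩
  obtain ⟨j, hjmem, hxl, hxr, hjor⟩ := hcover
  have haj := ha j hjmem
  set u := (x - b j) / a j with hu
  have hxu : a j * u + b j = x := by
    rw [hu]
    field_simp <;> ring
  have hl0j := hl0 j hjmem
  have hlNj := hlN j hjmem
  have huI : u ∈ Set.Icc (t 0) (t N) := by
    constructor
    · rw [hu, le_div_iff₀ haj]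
      nlinarith
    · rw [hu, div_le_iff₀ haj]
      nlinarith
  have hxmem : a j * u + b j ∈ (if j = N then Set.Icc (t (N - 1)) (t N)
      else Set.Ico (t (j - 1)) (t j)) := by
    rw [hxu]
    split_ifs with hjN
    · subst hjN
      exact ⟨hxl, hxN⟩
    · rcases hjor with h | h
      · exact absurd h hjN
      · exact ⟨hxl, h⟩
  have hTg := hT g j hjmem u huI hxmem
  have hTg' := hT g' j hjmem u huI hxmem
  rw [hxu] at hTg hTg'
  have hdiff : T g x - T g' x = δ j * (s j (g u) - s j (g' u)) := by
    rw [hTg, hTg']; ring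
  show |T g x - T g' x| ≤ δmax * ψ D
  rw [hdiff, abs_mul]
  have hs1 : |s j (g u) - s j (g' u)| ≤ ψ (|g u - g' u|) := hs j hjmem _ _
  have hs2 : ψ (|g u - g' u|) ≤ ψ D :=
    hψ_mono _ _ (abs_nonneg _) (hDmem u huI)
  have hδj : |δ j| ≤ δmax := hδmax ▸ Finset.le_sup' (fun j => |δ j|) hjmem
  calc |δ j| * |s j (g u) - s j (g' u)| ≤ |δ j| * ψ D :=
        mul_le_mul_of_nonneg_left (le_trans hs1 hs2) (abs_nonneg _)
    _ ≤ δmax * ψ D := mul_le_mul_of_nonneg_right hδj hψD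
end

section
/- Let A = I × ℝ with metric d_η((t,x),(t',x')) = |t−t'| + η|x−x'| where η = (1 − max_j|a_j|)/(2(C+1)) and C = max_j|c_j|. Define w_j(t,x) = (l_j(t), F_j(t,x)) where l_j(t) = a_j t + b_j with max_j |a_j| < 1, and F_j(t,x) = c_j t + δ_j s_j(x) + d_j with each s_j satisfying |s_j(x)−s_j(y)| ≤ ψ(|x−y|) for a common nondecreasing ψ with ψ(t)/t < 1 and ψ(t)/t nonincreasing, and δ·sup_{t>0}ψ(t)/t < 1 where δ = max_j|δ_j|. Then each w_j is a Rakotch contraction on (A, d_η), i.e. d_η(w_j(p), w_j(q)) ≤ γ(d_η(p,q))·d_η(p,q), where γ(s) = max{max_j|a_j| + ηC + η, δψ(s)/s} satisfies γ(s) < 1 and γ is nonincreasing. -/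
set_option maxHeartbeats 2000000 in
/-- Each map `w_j(t,x) = (l_j(t), F_j(t,x))` is a Rakotch contraction on
`A = I × ℝ` with the metric `d_η`, with comparison ratio
`γ(s) = max (max_j|a_j| + ηC + η) (δ·ψ(s)/s)`, which is `< 1` and nonincreasing. -/
theorem w_maps_rakotch (N : ℕ) (hN : 1 ≤ N) (t₀ tN : ℝ) (htI : t₀ < tN)
    (a b c d δ : ℕ → ℝ) (s : ℕ → ℝ → ℝ) (ψ : ℝ → ℝ)
    (hψ_mono : ∀ u v : ℝ, 0 ≤ u → u ≤ v → ψ u ≤ ψ v)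
    (hψ_lt : ∀ u : ℝ, 0 < u → ψ u < u)
    (hψ_ratio : ∀ u v : ℝ, 0 < u → u < v → ψ v / v ≤ ψ u / u)
    (hs : ∀ j ∈ Finset.Icc 1 N, ∀ x y : ℝ, |s j x - s j y| ≤ ψ (|x - y|))
    (hne : (Finset.Icc 1 N).Nonempty)
    (amax C δmax : ℝ)
    (hamax : amax = (Finset.Icc 1 N).sup' hne fun j => |a j|)
    (hamax1 : amax < 1)
    (hC : C = (Finset.Icc 1 N).sup' hne fun j => |c j|)
    (hδmax : δmax = (Finset.Icc 1 N).sup' hne fun j => |δ j|)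
    (hδψ : ∃ β : ℝ, β < 1 ∧ ∀ u : ℝ, 0 < u → δmax * (ψ u / u) ≤ β)
    (η : ℝ) (hη : η = (1 - amax) / (2 * (C + 1)))
    -- the metric d_η and the maps w_j
    (dη : ℝ × ℝ → ℝ × ℝ → ℝ)
    (hdη : ∀ p q : ℝ × ℝ, dη p q = |p.1 - q.1| + η * |p.2 - q.2|)
    (w : ℕ → ℝ × ℝ → ℝ × ℝ)
    (hw : ∀ j ∈ Finset.Icc 1 N, ∀ p : ℝ × ℝ,
      w j p = (a j * p.1 + b j, c j * p.1 + δ j * s j p.2 + d j))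
    (γ : ℝ → ℝ)
    (hγ : ∀ u : ℝ, γ u = max (amax + η * C + η) (δmax * (ψ u / u))) :
    (∀ u : ℝ, 0 < u → γ u < 1) ∧
    (∀ u v : ℝ, 0 < u → u ≤ v → γ v ≤ γ u) ∧
    (∀ j ∈ Finset.Icc 1 N, ∀ p q : ℝ × ℝ,
      p.1 ∈ Set.Icc t₀ tN → q.1 ∈ Set.Icc t₀ tN →
      dη (w j p) (w j q) ≤ γ (dη p q) * dη p q) := by

  obtain ⟨j₀, hj₀⟩ := hne
  have hamax0 : 0 ≤ amax := by
    rw [hamax]; exact le_trans (abs_nonneg _) (Finset.le_sup' (fun j => |a j|) hj₀)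
  have hC0 : 0 ≤ C := by
    rw [hC]; exact le_trans (abs_nonneg _) (Finset.le_sup' (fun j => |c j|) hj₀)
  have hδ0 : 0 ≤ δmax := by
    rw [hδmax]; exact le_trans (abs_nonneg _) (Finset.le_sup' (fun j => |δ j|) hj₀)
  have hη0 : 0 < η := by
    rw [hη]; apply div_pos <;> linarith
  have hη1 : η ≤ 1 := by
    rw [hη, div_le_one (by linarith)]; linarith
  have hMeq : amax + η * C + η = (1 + amax) / 2 := by
    rw [hη]; field_simp; ring
  have hM1 : amax + η * C + η < 1 := by rw [hMeq]; linarith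
  have hM0 : 0 < amax + η * C + η := by rw [hMeq]; linarith
  obtain ⟨β, hβ1, hβ⟩ := hδψ
  have hψnn : ∀ u : ℝ, 0 ≤ u → 0 ≤ ψ u := by
    intro u hu
    have h := hs j₀ hj₀ u 0
    rw [sub_zero, abs_of_nonneg hu] at h
    exact le_trans (abs_nonneg _) h
  have hψzero : ψ 0 = 0 := by
    have h1 : 0 ≤ ψ 0 := hψnn 0 le_rfl
    rcases eq_or_lt_of_le h1 with h | h
    · exact h.symm
    · exfalso
      have h2 : ψ 0 ≤ ψ (ψ 0) := hψ_mono 0 (ψ 0) le_rfl h.le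
      have h3 : ψ (ψ 0) < ψ 0 := hψ_lt (ψ 0) h
      linarith
  have hγ1 : ∀ u : ℝ, 0 < u → γ u < 1 := by
    intro u hu
    rw [hγ]
    exact max_lt hM1 (lt_of_le_of_lt (hβ u hu) hβ1)
  refine ⟨hγ1, ?_, ?_⟩
  · intro u v hu huv
    rcases eq_or_lt_of_le huv with rfl | h
    · exact le_rfl
    · rw [hγ, hγ]
      exact max_le_max le_rfl (mul_le_mul_of_nonneg_left (hψ_ratio u v hu h) hδ0)
  · -- key inequality
    have key : ∀ T u : ℝ, 0 ≤ T → 0 ≤ u →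
        amax * T + η * C * T + η * (δmax * ψ u) ≤ γ (T + η * u) * (T + η * u) := by
      intro T u hT hu
      set D := T + η * u with hD
      have hD0 : 0 ≤ D := by positivity
      rcases eq_or_lt_of_le hD0 with hDz | hDpos
      · have hT0 : T = 0 := by nlinarith
        have hu0 : u = 0 := by nlinarith
        rw [hT0, hu0, hψzero, ← hDz, mul_zero]
        simp
      · have hγM : amax + η * C + η ≤ γ D := by rw [hγ]; exact le_max_left _ _
        have hγR : δmax * (ψ D / D) ≤ γ D := by rw [hγ]; exact le_max_right _ _
        have hγlt : γ D < 1 := hγ1 D hDpos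
        have hγ0 : 0 < γ D := lt_of_lt_of_le hM0 hγM
        by_cases huD : u ≤ D
        · have hηγ : η ≤ γ D := by nlinarith [mul_nonneg hη0.le hC0]
          have h1 : δmax * ψ u ≤ δmax * ψ D :=
            mul_le_mul_of_nonneg_left (hψ_mono u D hu huD) hδ0
          have h2 : δmax * ψ D ≤ γ D * D := by
            have e : δmax * ψ D = δmax * (ψ D / D) * D := by field_simp
            rw [e]
            exact mul_le_mul_of_nonneg_right hγR hD0
          have h3 : η * (δmax * ψ u) ≤ η * (γ D * D) :=
            mul_le_mul_of_nonneg_left (by linarith) hη0.le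
          have h4 : amax * T + η * C * T ≤ (γ D - η) * T := by
            nlinarith [mul_le_mul_of_nonneg_right
              (show amax + η * C ≤ γ D - η by linarith) hT]
          have h5 : η * (γ D * D) ≤ η * D :=
            mul_le_mul_of_nonneg_left (mul_le_of_le_one_left hD0 hγlt.le) hη0.le
          have h6 : (γ D - η) * T + η * D ≤ γ D * D := by
            nlinarith [mul_le_mul_of_nonneg_right hηγ (mul_nonneg hη0.le hu)]
          nlinarith [h3, h4, h5, h6]
        · push_neg at huD
          have hu0 : 0 < u := lt_trans hDpos huD
          have hr : δmax * (ψ u / u) ≤ δmax * (ψ D / D) :=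
            mul_le_mul_of_nonneg_left (hψ_ratio D u hDpos huD) hδ0
          have h1 : δmax * ψ u ≤ γ D * u := by
            have e : δmax * ψ u = δmax * (ψ u / u) * u := by field_simp
            rw [e]
            exact mul_le_mul_of_nonneg_right (le_trans hr hγR) hu0.le
          have h2 : amax * T + η * C * T ≤ γ D * T := by
            nlinarith [mul_le_mul_of_nonneg_right
              (show amax + η * C ≤ γ D by linarith) hT]
          have h3 : η * (δmax * ψ u) ≤ η * (γ D * u) :=
            mul_le_mul_of_nonneg_left h1 hη0.le
          have h4 : γ D * D = γ D * T + η * (γ D * u) := by rw [hD]; ring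
          linarith
    intro j hj p q _ _
    have haj : |a j| ≤ amax := by rw [hamax]; exact Finset.le_sup' (fun j => |a j|) hj
    have hcj : |c j| ≤ C := by rw [hC]; exact Finset.le_sup' (fun j => |c j|) hj
    have hdj : |δ j| ≤ δmax := by rw [hδmax]; exact Finset.le_sup' (fun j => |δ j|) hj
    rw [hdη, hw j hj p, hw j hj q, hdη]
    have e1 : a j * p.1 + b j - (a j * q.1 + b j) = a j * (p.1 - q.1) := by ring
    have e2 : c j * p.1 + δ j * s j p.2 + d j - (c j * q.1 + δ j * s j q.2 + d j)
        = c j * (p.1 - q.1) + δ j * (s j p.2 - s j q.2) := by ring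
    simp only [e1, e2]
    have b1 : |a j * (p.1 - q.1)| ≤ amax * |p.1 - q.1| := by
      rw [abs_mul]
      exact mul_le_mul_of_nonneg_right haj (abs_nonneg _)
    have b2 : |c j * (p.1 - q.1) + δ j * (s j p.2 - s j q.2)|
        ≤ C * |p.1 - q.1| + δmax * ψ (|p.2 - q.2|) := by
      calc |c j * (p.1 - q.1) + δ j * (s j p.2 - s j q.2)|
          ≤ |c j * (p.1 - q.1)| + |δ j * (s j p.2 - s j q.2)| := abs_add_le _ _
        _ ≤ C * |p.1 - q.1| + δmax * ψ (|p.2 - q.2|) := by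
            rw [abs_mul, abs_mul]
            exact add_le_add (mul_le_mul_of_nonneg_right hcj (abs_nonneg _))
              (mul_le_mul hdj (hs j hj p.2 q.2) (abs_nonneg _) hδ0)
    have := key (|p.1 - q.1|) (|p.2 - q.2|) (abs_nonneg _) (abs_nonneg _)
    nlinarith [abs_nonneg (p.1 - q.1), abs_nonneg (p.2 - q.2), mul_le_mul_of_nonneg_left b2 hη0.le]
end

section
/- Let f be the fixed point of the Read-Bajraktarević operator with f(l_j(t)) = c_j t + δ_j s_j(f(t)) + d_j, where each s_j satisfies |s_j(x)−s_j(y)| ≤ ψ(|x−y|) with ψ nondecreasing and ψ(u) ≤ u, and let C = max_j |c_j|, δ = max_j |δ_j|. Then for every subinterval I' ⊆ I and each j, the oscillation satisfies w_f(l_j(I')) ≤ C·|I'| + δ·w_f(I'), where w_f(S) = sup_{a,b ∈ S}|f(a)−f(b)| and |I'| is the length of I'. -/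
/-!
Writing `l_j(u) = a_j u + b_j`, the self-referential equation gives, for `u, v ∈ I'`,
`f(l_j u) - f(l_j v) = c_j (u - v) + δ_j (s_j(f u) - s_j(f v))`, and `ψ(r) ≤ r` makes each `s_j`
1-Lipschitz. Hence `|f(l_j u) - f(l_j v)| ≤ C |I'| + δ w_f(I')`, and taking the supremum over
`u, v` bounds `w_f(l_j(I'))`.
-/

open Set

/-- `w_f(S)`. The real `sSup` is `0` on unbounded sets, so `|f a - f b| ≤ w_f(S)` needs `f` bounded
on `S`. -/
noncomputable def oscillationOn {α : Type*} (f : α → ℝ) (S : Set α) : ℝ :=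
  sSup ((fun p : α × α => |f p.1 - f p.2|) '' S ×ˢ S)

namespace oscillationOn

variable {α β : Type*} {f : α → ℝ} {S : Set α}

lemma nonneg : 0 ≤ oscillationOn f S :=
  Real.sSup_nonneg <| by rintro _ ⟨p, -, rfl⟩; exact abs_nonneg _

lemma bddAbove_of_abs_le {M : ℝ} (hM : ∀ x ∈ S, |f x| ≤ M) :
    BddAbove ((fun p : α × α => |f p.1 - f p.2|) '' S ×ˢ S) := by
  refine ⟨2 * M, ?_⟩
  rintro _ ⟨⟨u, v⟩, ⟨hu, hv⟩, rfl⟩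
  linarith [abs_sub (f u) (f v), hM u hu, hM v hv]

lemma abs_sub_le {M : ℝ} (hM : ∀ x ∈ S, |f x| ≤ M) {u v : α} (hu : u ∈ S) (hv : v ∈ S) :
    |f u - f v| ≤ oscillationOn f S :=
  le_csSup (bddAbove_of_abs_le hM) ⟨(u, v), ⟨hu, hv⟩, rfl⟩

lemma le_of_forall_abs_sub_le {K : ℝ} (hK : 0 ≤ K)
    (h : ∀ u ∈ S, ∀ v ∈ S, |f u - f v| ≤ K) : oscillationOn f S ≤ K :=
  Real.sSup_le (by rintro _ ⟨⟨u, v⟩, ⟨hu, hv⟩, rfl⟩; exact h u hu v hv) hK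

lemma image (f : β → ℝ) (g : α → β) (S : Set α) :
    oscillationOn f (g '' S) = oscillationOn (f ∘ g) S := by
  rw [oscillationOn, oscillationOn, prod_image_image_eq, image_image]
  rfl

end oscillationOn

lemma abs_sub_self_affine_le {s : ℝ → ℝ} (hs : ∀ x y, |s x - s y| ≤ |x - y|)
    (f : ℝ → ℝ) (c δ d u v : ℝ) :
    |(c * u + δ * s (f u) + d) - (c * v + δ * s (f v) + d)| ≤
      |c| * |u - v| + |δ| * |f u - f v| :=
  calc |(c * u + δ * s (f u) + d) - (c * v + δ * s (f v) + d)|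
      = |c * (u - v) + δ * (s (f u) - s (f v))| := by ring_nf
    _ ≤ |c| * |u - v| + |δ| * |s (f u) - s (f v)| := by
      rw [← abs_mul, ← abs_mul]; exact abs_add_le _ _
    _ ≤ |c| * |u - v| + |δ| * |f u - f v| := by
      gcongr |c| * |u - v| + |δ| * ?_; exact hs _ _

theorem oscillation_bound_general (N : ℕ) (t₀ tN : ℝ)
    (a b c d δ : ℕ → ℝ) (s : ℕ → ℝ → ℝ) (ψ : ℝ → ℝ)
    (hψ_le : ∀ u : ℝ, 0 ≤ u → ψ u ≤ u)
    (hs : ∀ j ∈ Finset.Icc 1 N, ∀ x y : ℝ, |s j x - s j y| ≤ ψ (|x - y|))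
    (hne : (Finset.Icc 1 N).Nonempty) (C δmax : ℝ)
    (hC : C = (Finset.Icc 1 N).sup' hne fun j => |c j|)
    (hδmax : δmax = (Finset.Icc 1 N).sup' hne fun j => |δ j|)
    (f : ℝ → ℝ)
    (hfb : ∃ M : ℝ, ∀ x ∈ Set.Icc t₀ tN, |f x| ≤ M)
    (hf : ∀ j ∈ Finset.Icc 1 N, ∀ u ∈ Set.Icc t₀ tN,
      f (a j * u + b j) = c j * u + δ j * s j (f u) + d j)
    -- oscillation of f on a set S
    (osc : Set ℝ → ℝ)
    (hosc : ∀ S : Set ℝ, osc S = sSup ((fun p : ℝ × ℝ => |f p.1 - f p.2|) '' S ×ˢ S)) :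
    ∀ j ∈ Finset.Icc 1 N, ∀ x y : ℝ, t₀ ≤ x → x ≤ y → y ≤ tN →
      osc ((fun u => a j * u + b j) '' Set.Icc x y) ≤
        C * (y - x) + δmax * osc (Set.Icc x y) := by
  obtain rfl : osc = oscillationOn f := funext hosc
  intro j hj x y hx hxy hy
  obtain ⟨M, hM⟩ := hfb
  have hsub : Icc x y ⊆ Icc t₀ tN := Icc_subset_Icc hx hy
  have hcj : |c j| ≤ C := hC ▸ Finset.le_sup' (fun j => |c j|) hj
  have hδj : |δ j| ≤ δmax := hδmax ▸ Finset.le_sup' (fun j => |δ j|) hj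
  have hsj : ∀ x y, |s j x - s j y| ≤ |x - y| :=
    fun x y => (hs j hj x y).trans (hψ_le _ (abs_nonneg _))
  have hC0 : 0 ≤ C := (abs_nonneg _).trans hcj
  have hδ0 : 0 ≤ δmax := (abs_nonneg _).trans hδj
  have hbound_nonneg : 0 ≤ C * (y - x) + δmax * oscillationOn f (Icc x y) :=
    add_nonneg (mul_nonneg hC0 (sub_nonneg.2 hxy)) (mul_nonneg hδ0 oscillationOn.nonneg)
  rw [oscillationOn.image]
  refine oscillationOn.le_of_forall_abs_sub_le hbound_nonneg fun u hu v hv => ?_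
  calc |f (a j * u + b j) - f (a j * v + b j)|
      ≤ |c j| * |u - v| + |δ j| * |f u - f v| := by
        rw [hf j hj u (hsub hu), hf j hj v (hsub hv)]
        exact abs_sub_self_affine_le hsj f _ _ _ u v
    _ ≤ C * (y - x) + δmax * oscillationOn f (Icc x y) := by
        gcongr
        · exact Real.dist_le_of_mem_Icc hu hv
        · exact oscillationOn.abs_sub_le (fun z hz => hM z (hsub hz)) hu hv

/-- Oscillation bound for the fixed point of the Read-Bajraktarević operator:
`w_f(l_j(I')) ≤ C·|I'| + δ·w_f(I')` for every subinterval `I' ⊆ I`. -/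
theorem oscillation_bound (N : ℕ) (hN : 1 ≤ N) (t₀ tN : ℝ) (htI : t₀ < tN)
    (a b c d δ : ℕ → ℝ) (s : ℕ → ℝ → ℝ) (ψ : ℝ → ℝ)
    (hψ_mono : ∀ u v : ℝ, 0 ≤ u → u ≤ v → ψ u ≤ ψ v)
    (hψ_le : ∀ u : ℝ, 0 ≤ u → ψ u ≤ u)
    (hs : ∀ j ∈ Finset.Icc 1 N, ∀ x y : ℝ, |s j x - s j y| ≤ ψ (|x - y|))
    (hne : (Finset.Icc 1 N).Nonempty) (C δmax : ℝ)
    (hC : C = (Finset.Icc 1 N).sup' hne fun j => |c j|)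
    (hδmax : δmax = (Finset.Icc 1 N).sup' hne fun j => |δ j|)
    (f : ℝ → ℝ)
    (hfb : ∃ M : ℝ, ∀ x ∈ Set.Icc t₀ tN, |f x| ≤ M)
    (hf : ∀ j ∈ Finset.Icc 1 N, ∀ u ∈ Set.Icc t₀ tN,
      f (a j * u + b j) = c j * u + δ j * s j (f u) + d j)
    -- oscillation of f on a set S
    (osc : Set ℝ → ℝ)
    (hosc : ∀ S : Set ℝ, osc S = sSup ((fun p : ℝ × ℝ => |f p.1 - f p.2|) '' S ×ˢ S)) :
    ∀ j ∈ Finset.Icc 1 N, ∀ x y : ℝ, t₀ ≤ x → x ≤ y → y ≤ tN →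
      osc ((fun u => a j * u + b j) '' Set.Icc x y) ≤
        C * (y - x) + δmax * osc (Set.Icc x y) :=
  oscillation_bound_general N t₀ tN a b c d δ s ψ hψ_le hs hne C δmax hC hδmax f hfb hf osc hosc
end

section
/- Let f be the bounded fixed point of the Read-Bajraktarević operator built from affine maps l_j with α = max_j|a_j| < 1, Rakotch maps s_j with common nondecreasing ψ satisfying ψ(u) ≤ u, and constants with δ = max_j|δ_j| < 1. Then the set of discontinuity points of f has Lebesgue measure zero, and hence f is Riemann integrable on I. -/
lemma rb_aux_final (n : ℕ) (δmax M ε C : ℝ) (hδ0 : 0 ≤ δmax) (hδ1 : δmax < 1)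
    (hM0 : 0 ≤ M) (hε : 0 < ε) (hC0 : 0 ≤ C) :
    C * (ε / (2 * (C + 1))) + δmax * (δmax ^ n * (2 * M) + ε / 2) ≤
      δmax ^ (n + 1) * (2 * M) + ε := by
  have hp : (0:ℝ) < ε / (2 * (C + 1)) := by positivity
  have heq : (C + 1) * (ε / (2 * (C + 1))) = ε / 2 := by
    field_simp
  have h1 : C * (ε / (2 * (C + 1))) ≤ ε / 2 := by nlinarith
  have h2 : δmax * (δmax ^ n * (2 * M)) = δmax ^ (n + 1) * (2 * M) := by ring
  have h3 : δmax * (ε / 2) ≤ ε / 2 := by nlinarith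
  nlinarith

set_option maxHeartbeats 1600000 in
/-- The bounded fixed point `f` of the Read-Bajraktarević operator (with
`α = max|a_j| < 1` and `δ = max|δ_j| < 1`) is continuous off a set of Lebesgue
measure zero, and hence Riemann integrable on `I = [t₀, t_N]`. -/
theorem fixed_point_riemann_integrable (N : ℕ) (hN : 1 ≤ N) (t : ℕ → ℝ)
    (ht : ∀ j < N, t j < t (j + 1))
    (a b c d δ : ℕ → ℝ) (s : ℕ → ℝ → ℝ) (ψ : ℝ → ℝ)
    (hl0 : ∀ j ∈ Finset.Icc 1 N, a j * t 0 + b j = t (j - 1))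
    (hlN : ∀ j ∈ Finset.Icc 1 N, a j * t N + b j = t j)
    (hψ_mono : ∀ u v : ℝ, 0 ≤ u → u ≤ v → ψ u ≤ ψ v)
    (hψ_le : ∀ u : ℝ, 0 ≤ u → ψ u ≤ u)
    (hs : ∀ j ∈ Finset.Icc 1 N, ∀ x y : ℝ, |s j x - s j y| ≤ ψ (|x - y|))
    (hne : (Finset.Icc 1 N).Nonempty) (α δmax : ℝ)
    (hα : α = (Finset.Icc 1 N).sup' hne fun j => |a j|) (hα1 : α < 1)
    (hδmax : δmax = (Finset.Icc 1 N).sup' hne fun j => |δ j|) (hδ1 : δmax < 1)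
    (f : ℝ → ℝ)
    (hfb : ∃ M : ℝ, ∀ x ∈ Set.Icc (t 0) (t N), |f x| ≤ M)
    (hf : ∀ j ∈ Finset.Icc 1 N, ∀ u ∈ Set.Icc (t 0) (t N),
      a j * u + b j ∈ (if j = N then Set.Icc (t (N - 1)) (t N)
        else Set.Ico (t (j - 1)) (t j)) →
      f (a j * u + b j) = c j * u + δ j * s j (f u) + d j) :
    MeasureTheory.volume
      {x ∈ Set.Icc (t 0) (t N) |
        ¬ ContinuousWithinAt f (Set.Icc (t 0) (t N)) x} = 0 ∧
    IntervalIntegrable f MeasureTheory.volume (t 0) (t N) := by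
  classical
  obtain ⟨M, hM⟩ := hfb
  -- monotonicity of the partition points
  have htmono : ∀ i j : ℕ, i < j → j ≤ N → t i < t j := by
    intro i j hij hjN
    induction j with
    | zero => omega
    | succ k ih =>
      rcases Nat.lt_succ_iff_lt_or_eq.mp hij with h | h
      · exact lt_trans (ih h (by omega)) (ht k (by omega))
      · subst h; exact ht i (by omega)
  have h0N : t 0 < t N := htmono 0 N (by omega) le_rfl
  have hM0 : 0 ≤ M := le_trans (abs_nonneg _) (hM (t 0) ⟨le_rfl, le_of_lt h0N⟩)
  -- positivity of the a j
  have ha : ∀ j ∈ Finset.Icc 1 N, 0 < a j := by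
    intro j hj
    obtain ⟨hj1, hjN⟩ := Finset.mem_Icc.mp hj
    have h1 := hl0 j hj
    have h2 := hlN j hj
    have hjj : t (j - 1) < t j := htmono (j - 1) j (by omega) hjN
    nlinarith [sub_pos.mpr h0N]
  -- bound on the c j
  set C : ℝ := (Finset.Icc 1 N).sup' hne fun j => |c j| with hC
  have hCle : ∀ j ∈ Finset.Icc 1 N, |c j| ≤ C := fun j hj =>
    Finset.le_sup' (fun j => |c j|) hj
  have hC0 : 0 ≤ C := by
    obtain ⟨j, hj⟩ := hne
    exact le_trans (abs_nonneg _) (hCle j hj)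
  clear_value C
  have hδle : ∀ j ∈ Finset.Icc 1 N, |δ j| ≤ δmax := by
    intro j hj; rw [hδmax]; exact Finset.le_sup' (fun j => |δ j|) hj
  have hδ0 : 0 ≤ δmax := by
    obtain ⟨j, hj⟩ := hne
    exact le_trans (abs_nonneg _) (hδle j hj)
  -- the countable "bad" set
  set S : ℕ → Set ℝ := fun n =>
    Nat.rec {y : ℝ | ∃ k ≤ N, y = t k}
      (fun _ Sn => Sn ∪ ⋃ j ∈ Finset.Icc 1 N, (fun p => a j * p + b j) '' Sn) n
    with hS
  have hS0 : S 0 = {y : ℝ | ∃ k ≤ N, y = t k} := rfl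
  have hSsucc : ∀ n, S (n + 1) =
      S n ∪ ⋃ j ∈ Finset.Icc 1 N, (fun p => a j * p + b j) '' S n := fun n => rfl
  have hScount : ∀ n, (S n).Countable := by
    intro n
    induction n with
    | zero =>
      refine Set.Countable.mono ?_ (Set.countable_range t)
      rintro y ⟨k, _, rfl⟩; exact ⟨k, rfl⟩
    | succ n ih =>
      rw [hSsucc]
      exact ih.union (Set.Countable.biUnion
        ((Finset.Icc 1 N).finite_toSet.countable) fun j _ => ih.image _)
  set B : Set ℝ := ⋃ n, S n with hB
  have hBcount : B.Countable := Set.countable_iUnion hScount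
  -- every non-bad point of Icc lies in the interior of some cell
  have hcell : ∀ x ∈ Set.Icc (t 0) (t N), x ∉ B →
      ∃ j ∈ Finset.Icc 1 N, t (j - 1) < x ∧ x < t j := by
    intro x hx hxB
    have hxP : ∀ k ≤ N, x ≠ t k := by
      intro k hk hxk
      exact hxB (Set.mem_iUnion.mpr ⟨0, ⟨k, hk, hxk⟩⟩)
    have hP0 : t 0 < x := lt_of_le_of_ne hx.1 (Ne.symm (hxP 0 (by omega)))
    set k := Nat.findGreatest (fun k => t k < x) N with hk
    have hkspec : t k < x :=
      Nat.findGreatest_spec (P := fun k => t k < x) (Nat.zero_le N) hP0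
    have hkN : k ≤ N := Nat.findGreatest_le N
    have hxN : x < t N := lt_of_le_of_ne hx.2 (hxP N le_rfl)
    have hkltN : k < N := by
      rcases lt_or_eq_of_le hkN with h | h
      · exact h
      · rw [h] at hkspec; linarith
    refine ⟨k + 1, Finset.mem_Icc.mpr ⟨by omega, by omega⟩, by exact hkspec, ?_⟩
    by_contra hcon
    push_neg at hcon
    have : t (k + 1) < x := lt_of_le_of_ne hcon (Ne.symm (hxP (k + 1) (by omega)))
    exact Nat.findGreatest_is_greatest (P := fun k => t k < x) (n := N)
      (by omega) (by omega) this
  -- key estimate, by induction on the depth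
  have key : ∀ n : ℕ, ∀ x ∈ Set.Icc (t 0) (t N), x ∉ B → ∀ ε > 0, ∃ ρ > 0,
      ∀ y ∈ Set.Icc (t 0) (t N), |y - x| < ρ →
        |f y - f x| ≤ δmax ^ n * (2 * M) + ε := by
    intro n
    induction n with
    | zero =>
      intro x hx hxB ε hε
      refine ⟨1, one_pos, fun y hy _ => ?_⟩
      have h1 := hM y hy
      have h2 := hM x hx
      have := abs_sub (f y) (f x)
      simp only [pow_zero, one_mul]
      calc |f y - f x| ≤ |f y| + |f x| := abs_sub _ _
        _ ≤ 2 * M + ε := by linarith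
    | succ n ih =>
      intro x hx hxB ε hε
      obtain ⟨j, hj, hx1, hx2⟩ := hcell x hx hxB
      have haj := ha j hj
      obtain ⟨hj1, hjN⟩ := Finset.mem_Icc.mp hj
      set x' := (x - b j) / a j with hx'
      have hlx' : a j * x' + b j = x := by
        rw [hx']; field_simp; ring
      have hx'1 : t 0 < x' := by
        rw [hx', lt_div_iff₀ haj]
        nlinarith [hl0 j hj]
      have hx'2 : x' < t N := by
        rw [hx', div_lt_iff₀ haj]
        nlinarith [hlN j hj]
      have hx'I : x' ∈ Set.Icc (t 0) (t N) := ⟨le_of_lt hx'1, le_of_lt hx'2⟩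
      have hx'B : x' ∉ B := by
        intro hcon
        obtain ⟨n₀, hn₀⟩ := Set.mem_iUnion.mp hcon
        refine hxB (Set.mem_iUnion.mpr ⟨n₀ + 1, ?_⟩)
        rw [hSsucc]
        refine Or.inr (Set.mem_biUnion hj ⟨x', hn₀, hlx'⟩)
      obtain ⟨ρ', hρ'pos, hIH⟩ := ih x' hx'I hx'B (ε / 2) (by linarith)
      refine ⟨min (min (x - t (j - 1)) (t j - x))
        (a j * min ρ' (ε / (2 * (C + 1)))), ?_, ?_⟩
      · have : 0 < ε / (2 * (C + 1)) := by positivity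
        have : 0 < min ρ' (ε / (2 * (C + 1))) := lt_min hρ'pos this
        have := mul_pos haj this
        exact lt_min (lt_min (by linarith) (by linarith)) this
      intro y hy hyx
      have hy1 : t (j - 1) < y := by
        have h1 : |y - x| < x - t (j - 1) := lt_of_lt_of_le hyx
          (le_trans (min_le_left _ _) (min_le_left _ _))
        have := abs_lt.mp h1
        linarith [this.1]
      have hy2 : y < t j := by
        have h1 : |y - x| < t j - x := lt_of_lt_of_le hyx
          (le_trans (min_le_left _ _) (min_le_right _ _))
        have := abs_lt.mp h1
        linarith [this.2]
      have hyx2 : |y - x| < a j * min ρ' (ε / (2 * (C + 1))) :=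
        lt_of_lt_of_le hyx (min_le_right _ _)
      set y' := (y - b j) / a j with hy'
      have hly' : a j * y' + b j = y := by
        rw [hy']; field_simp; ring
      have hy'1 : t 0 < y' := by
        rw [hy', lt_div_iff₀ haj]
        nlinarith [hl0 j hj]
      have hy'2 : y' < t N := by
        rw [hy', div_lt_iff₀ haj]
        nlinarith [hlN j hj]
      have hy'I : y' ∈ Set.Icc (t 0) (t N) := ⟨le_of_lt hy'1, le_of_lt hy'2⟩
      have hdist : |y' - x'| < min ρ' (ε / (2 * (C + 1))) := by
        have : y' - x' = (y - x) / a j := by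
          rw [hy', hx']; ring
        rw [this, abs_div, abs_of_pos haj, div_lt_iff₀ haj]
        linarith [hyx2]
      -- apply the functional equation at x and y
      have hcellx : a j * x' + b j ∈ (if j = N then Set.Icc (t (N - 1)) (t N)
          else Set.Ico (t (j - 1)) (t j)) := by
        rw [hlx']
        split_ifs with h
        · subst h; exact ⟨le_of_lt hx1, le_of_lt hx2⟩
        · exact ⟨le_of_lt hx1, hx2⟩
      have hcelly : a j * y' + b j ∈ (if j = N then Set.Icc (t (N - 1)) (t N)
          else Set.Ico (t (j - 1)) (t j)) := by
        rw [hly']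
        split_ifs with h
        · subst h; exact ⟨le_of_lt hy1, le_of_lt hy2⟩
        · exact ⟨le_of_lt hy1, hy2⟩
      have hfx := hf j hj x' hx'I hcellx
      have hfy := hf j hj y' hy'I hcelly
      rw [hlx'] at hfx
      rw [hly'] at hfy
      have hrec : |f y' - f x'| ≤ δmax ^ n * (2 * M) + ε / 2 :=
        hIH y' hy'I (lt_of_lt_of_le hdist (min_le_left _ _))
      have hsbound : |s j (f y') - s j (f x')| ≤ |f y' - f x'| :=
        le_trans (hs j hj _ _) (hψ_le _ (abs_nonneg _))
      have hδj := hδle j hj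
      have hcj := hCle j hj
      have hd1 : |y' - x'| ≤ ε / (2 * (C + 1)) :=
        le_of_lt (lt_of_lt_of_le hdist (min_le_right _ _))
      calc |f y - f x| = |c j * (y' - x') + δ j * (s j (f y') - s j (f x'))| := by
            rw [hfx, hfy]; ring_nf
        _ ≤ |c j * (y' - x')| + |δ j * (s j (f y') - s j (f x'))| := abs_add_le _ _
        _ = |c j| * |y' - x'| + |δ j| * |s j (f y') - s j (f x')| := by
            rw [abs_mul, abs_mul]
        _ ≤ C * (ε / (2 * (C + 1))) + δmax * (δmax ^ n * (2 * M) + ε / 2) := by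
            exact add_le_add (mul_le_mul hcj hd1 (abs_nonneg _) hC0)
              (mul_le_mul hδj (le_trans hsbound hrec) (abs_nonneg _) hδ0)
        _ ≤ δmax ^ (n + 1) * (2 * M) + ε :=
            rb_aux_final n δmax M ε C hδ0 hδ1 hM0 hε hC0
  -- continuity off B
  have cont : ∀ x ∈ Set.Icc (t 0) (t N), x ∉ B →
      ContinuousWithinAt f (Set.Icc (t 0) (t N)) x := by
    intro x hx hxB
    rw [Metric.continuousWithinAt_iff]
    intro ε hε
    obtain ⟨n, hn⟩ := exists_pow_lt_of_lt_one
      (show (0:ℝ) < ε / (2 * (2 * M + 1)) by positivity) hδ1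
    have hn2 : δmax ^ n * (2 * M) < ε / 2 := by
      have hp : 0 ≤ δmax ^ n := pow_nonneg hδ0 n
      have := mul_le_mul_of_nonneg_right (le_of_lt hn)
        (show (0:ℝ) ≤ 2 * M by linarith)
      calc δmax ^ n * (2 * M) ≤ ε / (2 * (2 * M + 1)) * (2 * M) := this
        _ < ε / 2 := by
            rw [div_mul_eq_mul_div, div_lt_div_iff₀ (by linarith) (by norm_num)]
            nlinarith
    obtain ⟨ρ, hρpos, hbound⟩ := key n x hx hxB (ε / 4) (by linarith)
    refine ⟨ρ, hρpos, fun y hy hyx => ?_⟩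
    rw [Real.dist_eq] at *
    calc |f y - f x| ≤ δmax ^ n * (2 * M) + ε / 4 := hbound y hy hyx
      _ < ε := by linarith
  constructor
  · refine MeasureTheory.measure_mono_null ?_
      (hBcount.measure_zero MeasureTheory.volume)
    intro x hx
    by_contra h
    exact hx.2 (cont x hx.1 h)
  · have hBnull : MeasureTheory.volume B = 0 :=
      hBcount.measure_zero MeasureTheory.volume
    have hmeas : MeasurableSet (Set.Icc (t 0) (t N) \ B) :=
      measurableSet_Icc.diff hBcount.measurableSet
    have hcontOn : ContinuousOn f (Set.Icc (t 0) (t N) \ B) := fun x hx =>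
      (cont x hx.1 hx.2).mono Set.diff_subset
    have haem : AEMeasurable f
        (MeasureTheory.volume.restrict (Set.Icc (t 0) (t N) \ B)) :=
      hcontOn.aemeasurable hmeas
    have hrestr : MeasureTheory.volume.restrict (Set.Icc (t 0) (t N) \ B) =
        MeasureTheory.volume.restrict (Set.Icc (t 0) (t N)) := by
      refine MeasureTheory.Measure.restrict_congr_set ?_
      rw [MeasureTheory.diff_ae_eq_self]
      exact MeasureTheory.measure_mono_null Set.inter_subset_right hBnull
    rw [hrestr] at haem
    have hint : MeasureTheory.IntegrableOn f (Set.Icc (t 0) (t N))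
        MeasureTheory.volume := by
      have hconst : MeasureTheory.IntegrableOn (fun _ : ℝ => M)
          (Set.Icc (t 0) (t N)) MeasureTheory.volume :=
        MeasureTheory.integrableOn_const measure_Icc_lt_top.ne
      refine hconst.mono' haem.aestronglyMeasurable ?_
      rw [MeasureTheory.ae_restrict_iff' measurableSet_Icc]
      exact MeasureTheory.ae_of_all _ fun x hx => by
        simpa [Real.norm_eq_abs] using hM x hx
    have huIcc : Set.uIcc (t 0) (t N) = Set.Icc (t 0) (t N) :=
      Set.uIcc_of_le (le_of_lt h0N)
    exact MeasureTheory.IntegrableOn.intervalIntegrable (by rwa [huIcc])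
end

section
/- With f as the Riemann-integrable fixed point of the Read-Bajraktarević operator, f solves the histopolation problem ∫_{t_{j-1}}^{t_j} f(t) dt = y_j a_j (t_N − t₀) for all j if and only if d_j = [2 y_j (t_N − t₀) − c_j (t_N² − t₀²) − 2 δ_j ∫_{t₀}^{t_N} s_j(f(t)) dt] / (2(t_N − t₀)) for all j. -/
/-!
The affine map `l_j` carries `[t₀, t_N]` onto `I_j`, so the change of variables `x = l_j u` and the
self-referential equation give
`∫_{I_j} f = a_j (c_j (t_N² − t₀²)/2 + δ_j ∫_{t₀}^{t_N} s_j ∘ f + d_j (t_N − t₀))`.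
This is affine in `d_j` with nonzero slope `a_j (t_N − t₀)`, so prescribing the integral is the
same as prescribing `d_j`.
-/

open Set MeasureTheory

lemma intervalIntegral_congr_Ioo {f g : ℝ → ℝ} {p q : ℝ} (hpq : p ≤ q) (h : EqOn f g (Ioo p q)) :
    ∫ u in p..q, f u = ∫ u in p..q, g u := by
  rw [intervalIntegral.integral_of_le hpq, intervalIntegral.integral_of_le hpq,
    integral_Ioc_eq_integral_Ioo, integral_Ioc_eq_integral_Ioo]
  exact setIntegral_congr_fun measurableSet_Ioo h

theorem intervalIntegral_eq_of_comp_affine_eq {f g : ℝ → ℝ} {p q α β c δ d : ℝ} (hpq : p ≤ q)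
    (hg : IntervalIntegrable g volume p q)
    (hf : ∀ u ∈ Ioo p q, f (α * u + β) = c * u + δ * g u + d) :
    ∫ x in (α * p + β)..(α * q + β), f x =
      α * (c * (q ^ 2 - p ^ 2) / 2 + δ * (∫ u in p..q, g u) + d * (q - p)) := by
  have hlin : IntervalIntegrable (fun u => c * u) volume p q :=
    (continuous_const.mul continuous_id).intervalIntegrable _ _
  rw [← intervalIntegral.smul_integral_comp_mul_add, intervalIntegral_congr_Ioo hpq hf,
    intervalIntegral.integral_add (hlin.add (hg.const_mul δ)) intervalIntegrable_const,
    intervalIntegral.integral_add hlin (hg.const_mul δ), intervalIntegral.integral_const_mul,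
    intervalIntegral.integral_const_mul, integral_id, intervalIntegral.integral_const,
    smul_eq_mul, smul_eq_mul]
  ring

lemma mapsTo_affine_Ioo {α β p q p' q' : ℝ} (hpq : p < q) (hpq' : p' < q')
    (hp : α * p + β = p') (hq : α * q + β = q') :
    MapsTo (fun u => α * u + β) (Ioo p q) (Ioo p' q') := by
  have hα : 0 < α := by nlinarith
  rintro u ⟨hpu, huq⟩
  constructor <;> dsimp only <;> nlinarith

theorem histopolation_iff_general (N : ℕ) (hN : 1 ≤ N) (t : ℕ → ℝ)
    (ht : ∀ j < N, t j < t (j + 1))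
    (a b c d δ y : ℕ → ℝ) (s : ℕ → ℝ → ℝ)
    (hl0 : ∀ j ∈ Finset.Icc 1 N, a j * t 0 + b j = t (j - 1))
    (hlN : ∀ j ∈ Finset.Icc 1 N, a j * t N + b j = t j)
    (f : ℝ → ℝ)
    (hf : ∀ j ∈ Finset.Icc 1 N, ∀ u ∈ Set.Icc (t 0) (t N),
      a j * u + b j ∈ (if j = N then Set.Icc (t (N - 1)) (t N)
        else Set.Ico (t (j - 1)) (t j)) →
      f (a j * u + b j) = c j * u + δ j * s j (f u) + d j)
    (hsfint : ∀ j ∈ Finset.Icc 1 N,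
      IntervalIntegrable (fun u => s j (f u)) MeasureTheory.volume (t 0) (t N)) :
    (∀ j ∈ Finset.Icc 1 N,
        ∫ x in (t (j - 1))..(t j), f x = y j * a j * (t N - t 0)) ↔
    (∀ j ∈ Finset.Icc 1 N,
        d j = (2 * y j * (t N - t 0) - c j * ((t N) ^ 2 - (t 0) ^ 2) -
          2 * δ j * ∫ u in (t 0)..(t N), s j (f u)) / (2 * (t N - t 0))) := by
  have hT : t 0 < t N := strictMonoOn_Iic_of_lt_succ ht (by simp) (by simp) (by omega)
  refine forall₂_congr fun j hj => ?_
  obtain ⟨hj1, hjN⟩ := Finset.mem_Icc.mp hj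
  have htj : t (j - 1) < t j :=
    strictMonoOn_Iic_of_lt_succ ht (by simp; omega) (by simpa) (by omega)
  have hmaps := mapsTo_affine_Ioo hT htj (hl0 j hj) (hlN j hj)
  have ha : a j ≠ 0 := fun h0 => htj.ne (by rw [← hl0 j hj, ← hlN j hj, h0, zero_mul, zero_mul])
  have hpiece : ∀ u ∈ Ioo (t 0) (t N), f (a j * u + b j) = c j * u + δ j * s j (f u) + d j :=
    fun u hu => hf j hj u (Ioo_subset_Icc_self hu) <| by
      split_ifs with hlast
      · subst hlast
        exact Ioo_subset_Icc_self (hmaps hu)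
      · exact Ioo_subset_Ico_self (hmaps hu)
  rw [← hl0 j hj, ← hlN j hj, intervalIntegral_eq_of_comp_affine_eq hT.le (hsfint j hj) hpiece,
    eq_div_iff (by linarith)]
  constructor <;> intro h
  · refine mul_left_cancel₀ ha ?_
    linear_combination 2 * h
  · linear_combination (a j / 2) * h

/-- The fixed point `f` of the Read-Bajraktarević operator solves the
histopolation problem `∫_{t_{j-1}}^{t_j} f = y_j a_j (t_N − t₀)` for all `j`
if and only if each `d_j` is given by the stated formula. -/
theorem histopolation_iff (N : ℕ) (hN : 1 ≤ N) (t : ℕ → ℝ)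
    (ht : ∀ j < N, t j < t (j + 1))
    (a b c d δ y : ℕ → ℝ) (s : ℕ → ℝ → ℝ)
    (hl0 : ∀ j ∈ Finset.Icc 1 N, a j * t 0 + b j = t (j - 1))
    (hlN : ∀ j ∈ Finset.Icc 1 N, a j * t N + b j = t j)
    (f : ℝ → ℝ)
    (hf : ∀ j ∈ Finset.Icc 1 N, ∀ u ∈ Set.Icc (t 0) (t N),
      a j * u + b j ∈ (if j = N then Set.Icc (t (N - 1)) (t N)
        else Set.Ico (t (j - 1)) (t j)) →
      f (a j * u + b j) = c j * u + δ j * s j (f u) + d j)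
    (hfint : IntervalIntegrable f MeasureTheory.volume (t 0) (t N))
    (hsfint : ∀ j ∈ Finset.Icc 1 N,
      IntervalIntegrable (fun u => s j (f u)) MeasureTheory.volume (t 0) (t N)) :
    (∀ j ∈ Finset.Icc 1 N,
        ∫ x in (t (j - 1))..(t j), f x = y j * a j * (t N - t 0)) ↔
    (∀ j ∈ Finset.Icc 1 N,
        d j = (2 * y j * (t N - t 0) - c j * ((t N) ^ 2 - (t 0) ^ 2) -
          2 * δ j * ∫ u in (t 0)..(t N), s j (f u)) / (2 * (t N - t 0))) :=
  histopolation_iff_general N hN t ht a b c d δ y s hl0 hlN f hf hsfint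
end
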